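/- For every v ∈ W_i and every u ∈ T, the distance from v to u in G satisfies δ_G(v,u) = min_{z ∈ T ∪ {u}} ( δ_i(v,z) + δ_G(z,u) ); in particular, either some directed walk realizing δ_G(v,u) lies entirely inside G_i, or δ_G(v,u) = δ_i(v,z) + δ_G(z,u) for some z ∈ T. -/

import Mathlib

/-- A directed graph on vertex type `V` with integer edge lengths. -/
structure Digraph' (V : Type) where
  Adj : V → V → Prop
  len : V → V → ℤ

namespace Digraph'

variable {V : Type}

/-- Directed walks in `G` from `u` to `v`. -/
inductive Walk (G : Digraph' V) : V → V → Type where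
  | nil {u : V} : Walk G u u
  | cons {u v w : V} (h : G.Adj u v) (p : Walk G v w) : Walk G u w

/-- The total length (weight) of a walk: the sum of the lengths of its edges. -/
def Walk.weight {G : Digraph' V} : {u v : V} → G.Walk u v → ℤ
  | _, _, .nil => 0
  | u, _, .cons (v := x) _ p => G.len u x + Walk.weight p

/-- The list of vertices visited by a walk. -/
def Walk.support {G : Digraph' V} : {u v : V} → G.Walk u v → List V
  | u, _, .nil => [u]
  | u, _, .cons _ p => u :: Walk.support p

/-- The number of edges of a walk. -/
def Walk.edgeCount {G : Digraph' V} : {u v : V} → G.Walk u v → ℕ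
  | _, _, .nil => 0
  | _, _, .cons _ p => Walk.edgeCount p + 1

/-- The distance from `u` to `v`: the infimum of the total lengths of directed walks
from `u` to `v` (`⊤` if there is no such walk). -/
noncomputable def dist (G : Digraph' V) (u v : V) : EReal :=
  ⨅ p : G.Walk u v, ((Walk.weight p : ℝ) : EReal)

/-- The subgraph of `G` induced by a set `S` of vertices. -/
def induce (G : Digraph' V) (S : Set V) : Digraph' V where
  Adj a b := G.Adj a b ∧ a ∈ S ∧ b ∈ S
  len := G.len

end Digraph'

/-!
A walk from `v ∈ V_i \ T` stays inside `G_i` until it first meets `T`, since an edge leaving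
`V_i \ T` has both endpoints in `V_i` by the delta-system property; cutting a shortest walk to
`u ∈ T` at that first vertex `z ∈ T` gives `δ_G(v,u) ≥ δ_i(v,z) + δ_G(z,u)`, and the reverse
inequality is the triangle inequality. Since there are no negative cycles, cycle removal bounds
all walk weights below on a finite vertex set, so the infima defining the distances are attained.
-/

namespace Digraph'

variable {V : Type} {G : Digraph' V}

def Walk.append : {a b c : V} → G.Walk a b → G.Walk b c → G.Walk a c
  | _, _, _, .nil, q => q
  | _, _, _, .cons h p, q => .cons h (p.append q)

theorem Walk.weight_append : ∀ {a b c : V} (p : G.Walk a b) (q : G.Walk b c),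
    (p.append q).weight = p.weight + q.weight
  | _, _, _, .nil, q => by simp [append, weight]
  | _, _, _, .cons h p, q => by simp [append, weight, weight_append p q, add_assoc]

def Walk.ofInduce {S : Set V} : {a b : V} → (G.induce S).Walk a b → G.Walk a b
  | _, _, .nil => .nil
  | _, _, .cons h p => .cons h.1 p.ofInduce

theorem Walk.weight_ofInduce {S : Set V} : ∀ {a b : V} (p : (G.induce S).Walk a b),
    p.ofInduce.weight = p.weight
  | _, _, .nil => rfl
  | _, _, .cons _ p => congrArg (G.len _ _ + ·) (weight_ofInduce p)

theorem Walk.exists_split_of_mem_support : ∀ {a b : V} (p : G.Walk a b) {x : V},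
    x ∈ p.support → ∃ (q : G.Walk a x) (r : G.Walk x b),
      q.weight + r.weight = p.weight ∧ r.support.Sublist p.support
  | _, _, .nil, x, hx => by
      obtain rfl : x = _ := List.mem_singleton.1 hx
      exact ⟨.nil, .nil, rfl, List.Sublist.refl _⟩
  | a, _, .cons h p, x, hx => by
      rcases List.mem_cons.1 hx with rfl | hx
      · exact ⟨.nil, .cons h p, zero_add _, List.Sublist.refl _⟩
      · obtain ⟨q, r, hw, hsub⟩ := exists_split_of_mem_support p hx
        exact ⟨.cons h q, r, by simp only [weight, ← hw, add_assoc], hsub.cons a⟩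

theorem Walk.exists_support_nodup_weight_le (hnoneg : ∀ (x : V) (p : G.Walk x x), 0 ≤ p.weight) :
    ∀ {a b : V} (p : G.Walk a b), ∃ q : G.Walk a b, q.weight ≤ p.weight ∧ q.support.Nodup
  | _, _, .nil => ⟨.nil, le_rfl, List.nodup_singleton _⟩
  | a, _, .cons h p => by
      obtain ⟨q, hqw, hq⟩ := exists_support_nodup_weight_le hnoneg p
      by_cases ha : a ∈ q.support
      · obtain ⟨q₁, q₂, hw, hsub⟩ := q.exists_split_of_mem_support ha
        have hcycle := hnoneg a (.cons h q₁)
        simp only [weight] at hcycle ⊢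
        exact ⟨q₂, by linarith, hq.sublist hsub⟩
      · exact ⟨.cons h q, by simp only [weight]; linarith, List.nodup_cons.2 ⟨ha, hq⟩⟩

theorem Walk.neg_mul_length_support_le_weight {M : ℤ} (hM₀ : 0 ≤ M)
    (hM : ∀ a b : V, -M ≤ G.len a b) :
    ∀ {a b : V} (p : G.Walk a b), -(M * p.support.length) ≤ p.weight
  | _, _, .nil => by simp [support, weight, hM₀]
  | a, _, .cons (v := c) _ p => by
      have := neg_mul_length_support_le_weight hM₀ hM p
      simp only [support, weight, List.length_cons, Nat.cast_add, Nat.cast_one]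
      linarith [hM a c]

theorem exists_forall_le_weight [Fintype V]
    (hnoneg : ∀ (x : V) (p : G.Walk x x), 0 ≤ p.weight) :
    ∃ m : ℤ, ∀ (a b : V) (p : G.Walk a b), m ≤ p.weight := by
  set M := ∑ e : V × V, |G.len e.1 e.2|
  have hM₀ : 0 ≤ M := Finset.sum_nonneg fun _ _ => abs_nonneg _
  have hM : ∀ a b : V, -M ≤ G.len a b := fun a b =>
    (neg_le_neg (Finset.single_le_sum (f := fun e : V × V => |G.len e.1 e.2|)
      (fun _ _ => abs_nonneg _) (Finset.mem_univ (a, b)))).trans (neg_abs_le _)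
  refine ⟨-(M * Fintype.card V), fun a b p => ?_⟩
  obtain ⟨q, hqw, hq⟩ := p.exists_support_nodup_weight_le hnoneg
  calc -(M * Fintype.card V) ≤ -(M * q.support.length) := by
        gcongr; exact_mod_cast hq.length_le_card
    _ ≤ q.weight := q.neg_mul_length_support_le_weight hM₀ hM
    _ ≤ p.weight := hqw

theorem dist_le_weight {a b : V} (p : G.Walk a b) : G.dist a b ≤ ((p.weight : ℝ) : EReal) :=
  iInf_le _ p

theorem dist_le_induce_dist (S : Set V) (a b : V) : G.dist a b ≤ (G.induce S).dist a b :=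
  le_iInf fun p => p.weight_ofInduce ▸ dist_le_weight p.ofInduce

theorem dist_ne_bot {a b : V} {m : ℤ} (hm : ∀ p : G.Walk a b, m ≤ p.weight) :
    G.dist a b ≠ ⊥ :=
  ne_bot_of_le_ne_bot (EReal.coe_ne_bot m)
    (le_iInf fun p => EReal.coe_le_coe_iff.2 (Int.cast_le.2 (hm p)))

theorem exists_weight_eq_dist {a b : V} {m : ℤ} (hm : ∀ p : G.Walk a b, m ≤ p.weight)
    (h : G.dist a b ≠ ⊤) : ∃ p : G.Walk a b, ((p.weight : ℝ) : EReal) = G.dist a b := by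
  have : Nonempty (G.Walk a b) := not_isEmpty_iff.1 fun _ => h (iInf_of_empty _)
  obtain ⟨_, ⟨p, rfl⟩, hleast⟩ :=
    Int.exists_least_of_bdd (P := fun w => ∃ p : G.Walk a b, p.weight = w)
      ⟨m, fun _ ⟨p, hp⟩ => hp ▸ hm p⟩ ⟨_, Classical.arbitrary _, rfl⟩
  refine ⟨p, le_antisymm (le_iInf fun q => ?_) (dist_le_weight p)⟩
  exact EReal.coe_le_coe_iff.2 (Int.cast_le.2 (hleast _ ⟨q, rfl⟩))

theorem dist_triangle {m : ℤ} (hm : ∀ (a b : V) (p : G.Walk a b), m ≤ p.weight) (a b c : V) :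
    G.dist a c ≤ G.dist a b + G.dist b c := by
  by_cases hab : G.dist a b = ⊤
  · simp [hab, EReal.top_add_of_ne_bot (dist_ne_bot (hm b c))]
  by_cases hbc : G.dist b c = ⊤
  · simp [hbc, EReal.add_top_of_ne_bot (dist_ne_bot (hm a b))]
  obtain ⟨p, hp⟩ := exists_weight_eq_dist (hm a b) hab
  obtain ⟨q, hq⟩ := exists_weight_eq_dist (hm b c) hbc
  rw [← hp, ← hq]
  exact_mod_cast p.weight_append q ▸ dist_le_weight (p.append q)

theorem Walk.exists_induce_walk_to_mem {S T : Set V}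
    (hS : ∀ a b : V, G.Adj a b → a ∈ S \ T → b ∈ S) {u : V} (hu : u ∉ S \ T) :
    ∀ {v : V} (p : G.Walk v u), v ∈ S \ T →
      ∃ z ∈ T, ∃ (q : (G.induce S).Walk v z) (r : G.Walk z u), q.weight + r.weight = p.weight
  | _, .nil, hv => absurd hv hu
  | v, .cons (v := c) h p, hv => by
      have hadj : (G.induce S).Adj v c := ⟨h, hv.1, hS v c h hv⟩
      by_cases hc : c ∈ T
      · exact ⟨c, hc, .cons hadj .nil, p, congrArg (· + p.weight) (add_zero (G.len v c))⟩
      · obtain ⟨z, hz, q, r, hw⟩ := exists_induce_walk_to_mem hS hu p ⟨hadj.2.2, hc⟩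
        exact ⟨z, hz, .cons hadj q, r, by simp only [weight, induce, add_assoc, ← hw]⟩

theorem mem_of_adj_of_mem_diff {k : ℕ} {Vs : Fin k → Set V}
    {T : Set V} (hdelta : ∀ i j : Fin k, i ≠ j → Vs i ∩ Vs j = T)
    (hedge : ∀ u v : V, G.Adj u v → ∃ i, u ∈ Vs i ∧ v ∈ Vs i) (i : Fin k) (a b : V)
    (hab : G.Adj a b) (ha : a ∈ Vs i \ T) : b ∈ Vs i := by
  obtain ⟨j, haj, hbj⟩ := hedge a b hab
  obtain rfl : j = i := by
    by_contra hji
    exact ha.2 (hdelta j i hji ▸ ⟨haj, ha.1⟩)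
  exact hbj

end Digraph'

theorem stmt3_general {V : Type} [Fintype V] (G : Digraph' V)
    (hnoneg : ∀ (x : V) (p : G.Walk x x), 0 ≤ p.weight)
    (k : ℕ) (Vs : Fin k → Set V)
    (T : Set V) (hdelta : ∀ i j : Fin k, i ≠ j → Vs i ∩ Vs j = T)
    (hedge : ∀ u v : V, G.Adj u v → ∃ i, u ∈ Vs i ∧ v ∈ Vs i)
    (i : Fin k) (u v : V) (hu : u ∈ T) (hv : v ∈ Vs i \ T) :
    (G.dist v u = ⨅ z ∈ T ∪ {u}, ((G.induce (Vs i)).dist v z + G.dist z u)) ∧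
    (G.dist v u ≠ ⊤ →
      (∃ p : (G.induce (Vs i)).Walk v u, ((p.weight : ℝ) : EReal) = G.dist v u) ∨
      ∃ z ∈ T, G.dist v u = (G.induce (Vs i)).dist v z + G.dist z u) := by
  obtain ⟨m, hm⟩ := G.exists_forall_le_weight hnoneg
  have hle (z : V) : G.dist v u ≤ (G.induce (Vs i)).dist v z + G.dist z u :=
    (G.dist_triangle hm v z u).trans (add_le_add_left (G.dist_le_induce_dist _ v z) _)
  have hge (h : G.dist v u ≠ ⊤) :
      ∃ z ∈ T, (G.induce (Vs i)).dist v z + G.dist z u ≤ G.dist v u := by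
    obtain ⟨p, hp⟩ := Digraph'.exists_weight_eq_dist (hm v u) h
    obtain ⟨z, hz, q, r, hw⟩ := p.exists_induce_walk_to_mem
      (Digraph'.mem_of_adj_of_mem_diff hdelta hedge i) (fun h => h.2 hu) hv
    refine ⟨z, hz, hp ▸ hw ▸ ?_⟩
    exact_mod_cast add_le_add (Digraph'.dist_le_weight q) (Digraph'.dist_le_weight r)
  refine ⟨le_antisymm (le_iInf₂ fun z _ => hle z) ?_, fun h => Or.inr ?_⟩
  · by_cases h : G.dist v u = ⊤
    · simp [h]
    · obtain ⟨z, hz, hzle⟩ := hge h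
      exact (iInf₂_le z (Or.inl hz)).trans hzle
  · obtain ⟨z, hz, hzle⟩ := hge h
    exact ⟨z, hz, le_antisymm (hle z) hzle⟩

/-- For every `v ∈ W_i` and every `u ∈ T`,
`δ_G(v,u) = min_{z ∈ T ∪ {u}} ( δ_i(v,z) + δ_G(z,u) )`; in particular, either some directed
walk realizing `δ_G(v,u)` lies entirely inside `G_i`, or
`δ_G(v,u) = δ_i(v,z) + δ_G(z,u)` for some `z ∈ T`. -/
theorem stmt3 {V : Type} [Fintype V] (G : Digraph' V)
    (hnoneg : ∀ (x : V) (p : G.Walk x x), 0 ≤ p.weight)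
    (k : ℕ) (hk : 2 ≤ k) (Vs : Fin k → Set V)
    (hcover : (⋃ i, Vs i) = Set.univ)
    (T : Set V) (hdelta : ∀ i j : Fin k, i ≠ j → Vs i ∩ Vs j = T)
    (hedge : ∀ u v : V, G.Adj u v → ∃ i, u ∈ Vs i ∧ v ∈ Vs i)
    (i : Fin k) (u v : V) (hu : u ∈ T) (hv : v ∈ Vs i \ T) :
    (G.dist v u = ⨅ z ∈ T ∪ {u}, ((G.induce (Vs i)).dist v z + G.dist z u)) ∧
    (G.dist v u ≠ ⊤ →
      (∃ p : (G.induce (Vs i)).Walk v u, ((p.weight : ℝ) : EReal) = G.dist v u) ∨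
      ∃ z ∈ T, G.dist v u = (G.induce (Vs i)).dist v z + G.dist z u) :=
  stmt3_general G hnoneg k Vs T hdelta hedge i u v hu hv
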